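/- The B^r norm is the largest seminorm |·|' on Dirac k-chains satisfying both |A|' ≤ ‖A‖_{B^0} for all A, and |Δ_u A|' ≤ ‖u‖·‖A‖_{B^{r-1}} for all A and u ∈ ℝⁿ, for every r ≥ 1. -/

import Mathlib

/-!
Subadditivity puts any seminorm satisfying `|Δ_σ(p;α)|' ≤ lnorm σ · ‖α‖` for all `|σ| ≤ r` below
the cost of every representation of `A`, hence below `‖A‖_{B^r}`. The two conditions give exactly
this bound: for `σ = []` through the mass norm, and for `σ = u :: τ` by applying the second
condition to `Δ_τ(p;α)`, whose `B^{r-1}` norm is at most `lnorm τ · ‖α‖`. Conversely, `B^r` satisfies the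
second condition because prefixing `u` to every difference chain of a representation of `A`
represents `Δ_u A` at `‖u‖` times the cost.
-/

noncomputable section

open Finsupp Filter

variable {E W : Type*} [NormedAddCommGroup E] [NormedSpace ℝ E]
  [NormedAddCommGroup W] [NormedSpace ℝ W]

/-- Translation of a Dirac chain through the vector `u`. -/
def transl (u : E) (A : E →₀ W) : E →₀ W := Finsupp.mapDomain (· + u) A

/-- The difference operator `Δ_u = T_u - I`. -/
def del (u : E) (A : E →₀ W) : E →₀ W := transl u A - A

/-- Iterated difference chain along a list of vectors. -/
def diff : List E → (E →₀ W) → (E →₀ W)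
  | [], A => A
  | u :: σ, A => del u (diff σ A)

/-- The product of the norms of the vectors in the list `σ`. -/
def lnorm (σ : List E) : ℝ := (σ.map norm).prod

/-- Costs of representations of `A` as sums of `j`-difference chains with `j ≤ r`. -/
def reps (r : ℕ) (A : E →₀ W) : Set ℝ :=
  {c | ∃ (m : ℕ) (σ : Fin m → List E) (p : Fin m → E) (α : Fin m → W),
      (∀ i, (σ i).length ≤ r) ∧
      A = ∑ i, diff (σ i) (Finsupp.single (p i) (α i)) ∧
      c = ∑ i, lnorm (σ i) * ‖α i‖}

/-- The `B^r` norm of a Dirac chain. -/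
def Bnorm (r : ℕ) (A : E →₀ W) : ℝ := sInf (reps r A)

/-- `M` is a `B^r`-bound for the cochain (differential form) `ω`. -/
def IsFormBound (r : ℕ) (ω : (E →₀ W) →ₗ[ℝ] ℝ) (M : ℝ) : Prop :=
  ∀ (σ : List E) (p : E) (α : W), σ.length ≤ r →
    |ω (diff σ (Finsupp.single p α))| ≤ M * lnorm σ * ‖α‖

/-- The `B^r` norm of a differential form. -/
def formNorm (r : ℕ) (ω : (E →₀ W) →ₗ[ℝ] ℝ) : ℝ :=
  sInf {M | 0 ≤ M ∧ IsFormBound r ω M}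

section

omit [NormedSpace ℝ E] [NormedSpace ℝ W]

open Pointwise

lemma lnorm_cons (u : E) (σ : List E) : lnorm (u :: σ) = ‖u‖ * lnorm σ := by
  simp [lnorm]

lemma lnorm_nonneg (σ : List E) : 0 ≤ lnorm σ :=
  List.prod_nonneg <| by simp

lemma del_sum {ι : Type*} (u : E) (s : Finset ι) (f : ι → E →₀ W) :
    del u (∑ i ∈ s, f i) = ∑ i ∈ s, del u (f i) :=
  map_sum (mapDomain.addMonoidHom (· + u) - AddMonoidHom.id (E →₀ W)) f s

lemma mem_reps_of_fintype {ι : Type*} [Fintype ι] {r : ℕ} {A : E →₀ W}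
    (σ : ι → List E) (p : ι → E) (α : ι → W) (hσ : ∀ i, (σ i).length ≤ r)
    (hA : A = ∑ i, diff (σ i) (single (p i) (α i))) :
    ∑ i, lnorm (σ i) * ‖α i‖ ∈ reps r A := by
  let e := Fintype.equivFin ι
  refine ⟨Fintype.card ι, σ ∘ e.symm, p ∘ e.symm, α ∘ e.symm, fun i => hσ _, ?_, ?_⟩
  · rw [hA, ← e.symm.sum_comp]
    rfl
  · rw [← e.symm.sum_comp]
    rfl

lemma reps_nonempty (r : ℕ) (A : E →₀ W) : (reps r A).Nonempty := by
  refine ⟨_, mem_reps_of_fintype (ι := A.support) (fun _ => []) (↑) (fun x => A x)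
    (fun _ => Nat.zero_le r) ?_⟩
  simp only [diff]
  rw [Finset.sum_coe_sort A.support (fun x => single x (A x))]
  exact (sum_single A).symm

lemma reps_nonneg {r : ℕ} {A : E →₀ W} {c : ℝ} (hc : c ∈ reps r A) : 0 ≤ c := by
  obtain ⟨m, σ, p, α, -, -, rfl⟩ := hc
  exact Finset.sum_nonneg fun i _ => mul_nonneg (lnorm_nonneg _) (norm_nonneg _)

lemma reps_bddBelow (r : ℕ) (A : E →₀ W) : BddBelow (reps r A) :=
  ⟨0, fun _ => reps_nonneg⟩

lemma reps_mono {r r' : ℕ} (h : r ≤ r') (A : E →₀ W) : reps r A ⊆ reps r' A := by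
  rintro c ⟨m, σ, p, α, hσ, hA, hc⟩
  exact ⟨m, σ, p, α, fun i => (hσ i).trans h, hA, hc⟩

lemma smul_reps_subset_reps_del (u : E) (r : ℕ) (A : E →₀ W) :
    ‖u‖ • reps r A ⊆ reps (r + 1) (del u A) := by
  rintro _ ⟨c, ⟨m, σ, p, α, hσ, hA, rfl⟩, rfl⟩
  refine ⟨m, fun i => u :: σ i, p, α, fun i => Nat.succ_le_succ (hσ i), ?_, ?_⟩
  · rw [hA, del_sum]
    rfl
  · simp only [smul_eq_mul, Finset.mul_sum, lnorm_cons, mul_assoc]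

lemma Bnorm_antitone (A : E →₀ W) : Antitone fun r => Bnorm r A :=
  fun _ _ h => csInf_le_csInf (reps_bddBelow _ A) (reps_nonempty _ A) (reps_mono h A)

lemma Bnorm_del_le (u : E) (r : ℕ) (A : E →₀ W) :
    Bnorm (r + 1) (del u A) ≤ ‖u‖ * Bnorm r A := by
  rw [Bnorm, Bnorm, ← smul_eq_mul, ← Real.sInf_smul_of_nonneg (norm_nonneg u)]
  exact csInf_le_csInf (reps_bddBelow _ _) ((reps_nonempty r A).smul_set)
    (smul_reps_subset_reps_del u r A)

lemma Bnorm_diff_single_le {r : ℕ} {σ : List E} (hσ : σ.length ≤ r) (p : E) (α : W) :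
    Bnorm r (diff σ (single p α)) ≤ lnorm σ * ‖α‖ :=
  csInf_le (reps_bddBelow _ _) <| by
    simpa using mem_reps_of_fintype (ι := Unit) (fun _ => σ) (fun _ => p) (fun _ => α)
      (fun _ => hσ) (by simp)

lemma le_Bnorm_of_forall_diff_single_le {F : Type*} [FunLike F (E →₀ W) ℝ]
    [AddGroupSeminormClass F (E →₀ W) ℝ] (s : F) {r : ℕ}
    (hs : ∀ (σ : List E) (p : E) (α : W), σ.length ≤ r →
      s (diff σ (single p α)) ≤ lnorm σ * ‖α‖) (A : E →₀ W) :
    s A ≤ Bnorm r A := by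
  refine le_csInf (reps_nonempty r A) ?_
  rintro c ⟨m, σ, p, α, hσ, rfl, rfl⟩
  calc s (∑ i, diff (σ i) (single (p i) (α i)))
      ≤ ∑ i, s (diff (σ i) (single (p i) (α i))) :=
        Finset.le_sum_of_subadditive s (map_zero s).le (map_add_le_add s) _ _
    _ ≤ ∑ i, lnorm (σ i) * ‖α i‖ := Finset.sum_le_sum fun i _ => hs _ _ _ (hσ i)

lemma diff_single_le_of_le_Bnorm {F : Type*} [FunLike F (E →₀ W) ℝ] (s : F) {r : ℕ}
    (h₀ : ∀ A, s A ≤ Bnorm 0 A) (hdel : ∀ u A, s (del u A) ≤ ‖u‖ * Bnorm r A)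
    (σ : List E) (p : E) (α : W) (hσ : σ.length ≤ r + 1) :
    s (diff σ (single p α)) ≤ lnorm σ * ‖α‖ := by
  match σ, hσ with
  | [], _ => exact (h₀ _).trans (Bnorm_diff_single_le (σ := []) le_rfl p α)
  | u :: τ, hσ =>
    calc s (del u (diff τ (single p α)))
        ≤ ‖u‖ * Bnorm r (diff τ (single p α)) := hdel u _
      _ ≤ ‖u‖ * (lnorm τ * ‖α‖) :=
        mul_le_mul_of_nonneg_left (Bnorm_diff_single_le (Nat.le_of_succ_le_succ hσ) p α)
          (norm_nonneg u)
      _ = lnorm (u :: τ) * ‖α‖ := by rw [lnorm_cons, mul_assoc]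

end

/-- For every `r ≥ 1`, the `B^r` norm is the largest seminorm `|·|'`
on Dirac `k`-chains satisfying `|A|' ≤ ‖A‖_{B^0}` and `|Δ_u A|' ≤ ‖u‖·‖A‖_{B^{r-1}}`:
the `B^r` norm satisfies both conditions, and any seminorm satisfying them is
pointwise `≤` the `B^r` norm. -/
theorem Bnorm_largest_seminorm {n : ℕ} {W : Type*}
    [NormedAddCommGroup W] [NormedSpace ℝ W] (r : ℕ) (hr : 1 ≤ r) :
    (∀ A : (EuclideanSpace ℝ (Fin n)) →₀ W, Bnorm r A ≤ Bnorm 0 A) ∧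
    (∀ (u : EuclideanSpace ℝ (Fin n)) (A : (EuclideanSpace ℝ (Fin n)) →₀ W),
      Bnorm r (del u A) ≤ ‖u‖ * Bnorm (r - 1) A) ∧
    (∀ s : Seminorm ℝ ((EuclideanSpace ℝ (Fin n)) →₀ W),
      (∀ A, s A ≤ Bnorm 0 A) →
      (∀ (u : EuclideanSpace ℝ (Fin n)) (A : (EuclideanSpace ℝ (Fin n)) →₀ W),
        s (del u A) ≤ ‖u‖ * Bnorm (r - 1) A) →
      ∀ A, s A ≤ Bnorm r A) := by
  have hr' : r - 1 + 1 = r := Nat.sub_add_cancel hr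
  refine ⟨fun A => Bnorm_antitone A (Nat.zero_le r), fun u A => hr' ▸ Bnorm_del_le u (r - 1) A,
    fun s h₀ hdel => le_Bnorm_of_forall_diff_single_le s fun σ p α hσ =>
      diff_single_le_of_le_Bnorm s h₀ hdel σ p α (hr'.symm ▸ hσ)⟩
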